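/- Let q be a real number with q > 0 and q ≠ 1, and let φ : W^q → W^q be an even q-derivation of degree s ∈ ℤ, i.e. φ is linear, φ(L_n) ∈ span{L_{n+s}} and φ(G_n) ∈ span{G_{n+s}} for all n ∈ ℤ, and φ([x,y]) = (1/(1+q^{s}))·([φ(x),α(y)] + [α(x),φ(y)]) for all homogeneous x,y ∈ W^q. Then φ is a scalar multiple of the inner q-derivation ad_{L_s} : x ↦ [L_s, x]. Hence (Der W^q)₀ = ⊕_{s∈ℤ} ⟨ad_{L_s}⟩. -/

import Mathlib

/-- The `q`-number `{n} = (1 - qⁿ)/(1 - q)`. -/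
noncomputable def qInt (q : ℂ) (n : ℤ) : ℂ := (1 - q ^ n) / (1 - q)

/-- The grading of the `q`-deformed Witt superalgebra: even part spanned by the `L n`
(`= b (Sum.inl n)`), odd part spanned by the `G n` (`= b (Sum.inr n)`). -/
def wGr {W : Type*} [AddCommGroup W] [Module ℂ W] (b : Module.Basis (ℤ ⊕ ℤ) ℂ W) :
    ZMod 2 → Submodule ℂ W :=
  fun i => if i = 0 then Submodule.span ℂ (Set.range fun n : ℤ => b (Sum.inl n))
           else Submodule.span ℂ (Set.range fun n : ℤ => b (Sum.inr n))

/-!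
Write `φ (L n) = f n • L (n + s)` and `φ (G n) = g n • G (n + s)`. On the pairs `(L n, L m)` and
`(L n, G m)` the q-Leibniz rule is a linear system for `(f, g)`, and the coefficients
`({n} - {s}, {n + 1} - {s})` of `ad L_s` solve it; read backwards on all basis pairs, the same
identities show that `ad L_s` is a q-derivation. After subtracting a multiple of this solution it
remains to see that a solution with `f 0 = 0` (if `s ≠ 0`), resp. `f 1 = 0` (if `s = 0`),
vanishes. For `s ≠ 0` the equations with `m = 0` express `f` and `g` through `f 0`. For `s = 0`
they read `2 f (n + m) = (1 + qᵐ) f n + (1 + qⁿ) f m` for `n ≠ m` (similarly for `g`), and a step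
by `k` followed by the step back by `-k` gives `4 v = (1 + qᵏ) (1 + q⁻ᵏ) v`, hence `v = 0` since
`qᵏ ≠ 1`.
-/

-- `(1 + x) (1 + x⁻¹) - 4 = (x - 1)² / x`
lemma eq_zero_of_two_mul_eq_of_two_mul_eq_inv {K : Type*} [Field K] {x u v : K}
    (hx0 : x ≠ 0) (hx1 : x ≠ 1) (hu : 2 * u = (1 + x) * v) (hv : 2 * v = (1 + x⁻¹) * u) :
    v = 0 := by
  have h : v * (x - 1) ^ 2 = 0 := by
    linear_combination -(1 + x) * hu - 2 * x * hv - 2 * u * (mul_inv_cancel₀ hx0)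
  simpa [sub_eq_zero, hx1] using h

lemma injective_ofReal_zpow {q : ℝ} (hq0 : 0 < q) (hq1 : q ≠ 1) :
    Function.Injective ((q : ℂ) ^ · : ℤ → ℂ) := by
  intro m n h
  exact zpow_right_injective₀ hq0 hq1 (Complex.ofReal_injective (by simpa using h))

section QNumbers

variable {q : ℂ}

@[simp] lemma qInt_zero (q : ℂ) : qInt q 0 = 0 := by simp [qInt]

lemma qInt_one (hq1 : q ≠ 1) : qInt q 1 = 1 := by
  simp [qInt, div_self (sub_ne_zero.mpr hq1.symm)]

lemma ne_zero_of_zpow_injective (hq : Function.Injective (q ^ · : ℤ → ℂ)) : q ≠ 0 := by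
  rintro rfl
  exact absurd (@hq 1 2 (by simp)) (by decide)

lemma ne_one_of_zpow_injective (hq : Function.Injective (q ^ · : ℤ → ℂ)) : q ≠ 1 := by
  rintro rfl
  exact absurd (@hq 0 1 (by simp)) (by decide)

lemma one_add_zpow_ne_zero (hq : Function.Injective (q ^ · : ℤ → ℂ)) (n : ℤ) :
    1 + q ^ n ≠ 0 := by
  intro h
  have h2 : q ^ (2 * n) = q ^ (0 : ℤ) := by
    rw [mul_comm, zpow_mul, eq_neg_of_add_eq_zero_right h]; norm_num
  have hn : n = 0 := by simpa using hq h2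
  norm_num [hn] at h

lemma qInt_injective (hq : Function.Injective (q ^ · : ℤ → ℂ)) : Function.Injective (qInt q) := by
  intro m n h
  have h1q : (1 : ℂ) - q ≠ 0 := sub_ne_zero.mpr (ne_one_of_zpow_injective hq).symm
  exact hq (by simpa [qInt, div_left_inj' h1q] using h)

lemma qInt_ne_zero (hq : Function.Injective (q ^ · : ℤ → ℂ)) {n : ℤ} (hn : n ≠ 0) :
    qInt q n ≠ 0 :=
  fun e => hn (qInt_injective hq (e.trans (qInt_zero q).symm))

end QNumbers

/-- The q-Leibniz rule for `φ (L n) = f n • L (n + s)`, `φ (G n) = g n • G (n + s)` evaluated on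
`[L n, L m]` and `[L n, G m]`. -/
structure QLeibnizCoeffs (q : ℂ) (s : ℤ) (f g : ℤ → ℂ) : Prop where
  LL : ∀ n m : ℤ, (qInt q m - qInt q n) * f (n + m) * (1 + q ^ s) =
    f n * (1 + q ^ m) * (qInt q m - qInt q (n + s)) +
      (1 + q ^ n) * f m * (qInt q (m + s) - qInt q n)
  LG : ∀ n m : ℤ, (qInt q (m + 1) - qInt q n) * g (n + m) * (1 + q ^ s) =
    f n * (1 + q ^ (m + 1)) * (qInt q (m + 1) - qInt q (n + s)) +
      (1 + q ^ n) * g m * (qInt q (m + s + 1) - qInt q n)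

lemma qLeibnizCoeffs_adL {q : ℂ} (hq0 : q ≠ 0) (s : ℤ) :
    QLeibnizCoeffs q s (fun n => qInt q n - qInt q s) (fun n => qInt q (n + 1) - qInt q s) where
  LL n m := by
    simp only [qInt, zpow_add₀ hq0]
    ring
  LG n m := by
    simp only [qInt, zpow_add₀ hq0, zpow_one]
    ring

namespace QLeibnizCoeffs

variable {q : ℂ} {s : ℤ} {f g : ℤ → ℂ}

lemma sub (h : QLeibnizCoeffs q s f g) {f' g' : ℤ → ℂ} (h' : QLeibnizCoeffs q s f' g') :
    QLeibnizCoeffs q s (f - f') (g - g') where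
  LL n m := by
    simp only [Pi.sub_apply]
    linear_combination h.LL n m - h'.LL n m
  LG n m := by
    simp only [Pi.sub_apply]
    linear_combination h.LG n m - h'.LG n m

lemma smul (h : QLeibnizCoeffs q s f g) (c : ℂ) : QLeibnizCoeffs q s (c • f) (c • g) where
  LL n m := by
    simp only [Pi.smul_apply, smul_eq_mul]
    linear_combination c * h.LL n m
  LG n m := by
    simp only [Pi.smul_apply, smul_eq_mul]
    linear_combination c * h.LG n m

lemma f_mul_qInt (h : QLeibnizCoeffs q s f g) (hq : Function.Injective (q ^ · : ℤ → ℂ))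
    (n : ℤ) : f n * qInt q s = f 0 * (qInt q s - qInt q n) := by
  have h1q : (1 : ℂ) - q ≠ 0 := sub_ne_zero.mpr (ne_one_of_zpow_injective hq).symm
  refine mul_right_cancel₀ (one_add_zpow_ne_zero hq n) ?_
  have h0 := h.LL n 0
  simp only [qInt, add_zero, zpow_zero, zpow_add₀ (ne_zero_of_zpow_injective hq)] at h0 ⊢
  field_simp at h0 ⊢
  linear_combination h0

lemma g_mul_qInt (h : QLeibnizCoeffs q s f g) (hq : Function.Injective (q ^ · : ℤ → ℂ))
    (m : ℤ) : g m * qInt q s = f 0 * (qInt q s - qInt q (m + 1)) := by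
  have h1q : (1 : ℂ) - q ≠ 0 := sub_ne_zero.mpr (ne_one_of_zpow_injective hq).symm
  refine mul_right_cancel₀ (one_add_zpow_ne_zero hq (m + 1)) ?_
  have h0 := h.LG 0 m
  simp only [qInt, zero_add, zpow_zero, zpow_one, zpow_add₀ (ne_zero_of_zpow_injective hq)]
    at h0 ⊢
  field_simp at h0 ⊢
  linear_combination -h0

lemma eq_zero_of_apply_zero (h : QLeibnizCoeffs q s f g)
    (hq : Function.Injective (q ^ · : ℤ → ℂ)) (hs : s ≠ 0) (hf0 : f 0 = 0) : f = 0 ∧ g = 0 := by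
  have hqs := qInt_ne_zero hq hs
  refine ⟨funext fun n => ?_, funext fun m => ?_⟩
  · simpa [hf0, hqs] using h.f_mul_qInt hq n
  · simpa [hf0, hqs] using h.g_mul_qInt hq m

lemma two_mul_f_add (h : QLeibnizCoeffs q 0 f g) (hq : Function.Injective (q ^ · : ℤ → ℂ))
    {n m : ℤ} (hnm : n ≠ m) : 2 * f (n + m) = (1 + q ^ m) * f n + (1 + q ^ n) * f m := by
  have hne : qInt q m - qInt q n ≠ 0 := sub_ne_zero.mpr fun e => hnm (qInt_injective hq e).symm
  refine mul_left_cancel₀ hne ?_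
  have h0 := h.LL n m
  simp only [add_zero, zpow_zero] at h0
  linear_combination h0

lemma two_mul_g_add (h : QLeibnizCoeffs q 0 f g) (hq : Function.Injective (q ^ · : ℤ → ℂ))
    {n m : ℤ} (hnm : n ≠ m + 1) :
    2 * g (n + m) = (1 + q ^ (m + 1)) * f n + (1 + q ^ n) * g m := by
  have hne : qInt q (m + 1) - qInt q n ≠ 0 :=
    sub_ne_zero.mpr fun e => hnm (qInt_injective hq e).symm
  refine mul_left_cancel₀ hne ?_
  have h0 := h.LG n m
  simp only [add_zero, zpow_zero] at h0
  linear_combination h0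

-- Steps by `1` and by `-1` (`u = f (n + 1)`, `v = f n`) fit the pattern of
-- `eq_zero_of_two_mul_eq_of_two_mul_eq_inv` except at `n = 1` and `n = -2`.
lemma f_eq_zero_of_apply_one (h : QLeibnizCoeffs q 0 f g)
    (hq : Function.Injective (q ^ · : ℤ → ℂ)) (hf1 : f 1 = 0) : f = 0 := by
  have hq0 := ne_zero_of_zpow_injective hq
  have hq1 := ne_one_of_zpow_injective hq
  have h1q : (1 : ℂ) + q ≠ 0 := by simpa using one_add_zpow_ne_zero hq 1
  have hf0 : f 0 = 0 := by simpa [hf1, qInt_one hq1] using h.f_mul_qInt hq 1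
  have hfm1 : f (-1) = 0 := by
    have e := h.two_mul_f_add hq (n := -1) (m := 1) (by decide)
    simp only [hf1, hf0, mul_zero, add_zero, neg_add_cancel, zpow_one] at e
    simpa [h1q] using e.symm
  funext n
  by_cases hn1 : n = 1
  · rw [hn1, hf1, Pi.zero_apply]
  by_cases hn2 : n = -2
  · have e := h.two_mul_f_add hq (n := -2) (m := 1) (by decide)
    norm_num [hf1, hfm1, h1q] at e
    simpa [hn2] using e
  refine eq_zero_of_two_mul_eq_of_two_mul_eq_inv (u := f (n + 1)) hq0 hq1 ?_ ?_
  · simpa [hf1] using h.two_mul_f_add hq (m := 1) hn1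
  · simpa [hfm1] using h.two_mul_f_add hq (n := n + 1) (m := -1) (by omega)

lemma g_eq_zero_of_f_eq_zero (h : QLeibnizCoeffs q 0 f g)
    (hq : Function.Injective (q ^ · : ℤ → ℂ)) (hf : f = 0) : g = 0 := by
  funext m
  obtain ⟨n, hn, hnm, hnm'⟩ : ∃ n : ℤ, n ≠ 0 ∧ n ≠ m + 1 ∧ -n ≠ n + m + 1 :=
    ⟨|m| + 2, by have := le_abs_self m; have := neg_abs_le m; omega⟩
  refine eq_zero_of_two_mul_eq_of_two_mul_eq_inv (x := q ^ n) (u := g (n + m))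
    (zpow_ne_zero n (ne_zero_of_zpow_injective hq))
    (fun e => hn (hq (e.trans (zpow_zero q).symm))) ?_ ?_
  · simpa [hf] using h.two_mul_g_add hq hnm
  · simpa [hf, zpow_neg] using h.two_mul_g_add hq (m := n + m) hnm'

lemma exists_eq_smul_adL (h : QLeibnizCoeffs q s f g)
    (hq : Function.Injective (q ^ · : ℤ → ℂ)) :
    ∃ c : ℂ, f = c • (fun n => qInt q n - qInt q s) ∧
      g = c • (fun n => qInt q (n + 1) - qInt q s) := by
  have had := qLeibnizCoeffs_adL (ne_zero_of_zpow_injective hq) s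
  rcases eq_or_ne s 0 with rfl | hs
  · have hd := h.sub (had.smul (f 1))
    have hf := hd.f_eq_zero_of_apply_one hq
      (by simp [qInt_one (ne_one_of_zpow_injective hq)])
    exact ⟨f 1, sub_eq_zero.mp hf, sub_eq_zero.mp (hd.g_eq_zero_of_f_eq_zero hq hf)⟩
  · obtain ⟨hf, hg⟩ := (h.sub (had.smul (-f 0 / qInt q s))).eq_zero_of_apply_zero hq hs
      (by simp [div_mul_cancel₀ _ (qInt_ne_zero hq hs)])
    exact ⟨_, sub_eq_zero.mp hf, sub_eq_zero.mp hg⟩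

end QLeibnizCoeffs

lemma leibniz_of_basis {R M ι : Type*} [CommRing R] [AddCommGroup M] [Module R M]
    (b : Module.Basis ι R M) (B : M →ₗ[R] M →ₗ[R] M) (φ α : M →ₗ[R] M) (k : R)
    (h : ∀ i j, φ (B (b i) (b j)) = k • (B (φ (b i)) (α (b j)) + B (α (b i)) (φ (b j))))
    (x y : M) : φ (B x y) = k • (B (φ x) (α y) + B (α x) (φ y)) := by
  have e : B.compr₂ φ = k • ((B ∘ₗ φ).compl₂ α + (B ∘ₗ α).compl₂ φ) :=
    LinearMap.ext_basis b b fun i j => by simpa using h i j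
  simpa using LinearMap.congr_fun₂ e x y

open Sum

structure IsQWitt {W : Type*} [AddCommGroup W] [Module ℂ W] (q : ℂ)
    (b : Module.Basis (ℤ ⊕ ℤ) ℂ W) (B : W →ₗ[ℂ] W →ₗ[ℂ] W) (α : W →ₗ[ℂ] W) : Prop where
  br_LL : ∀ n m : ℤ, B (b (inl n)) (b (inl m)) = (qInt q m - qInt q n) • b (inl (n + m))
  br_LG : ∀ n m : ℤ, B (b (inl n)) (b (inr m)) = (qInt q (m + 1) - qInt q n) • b (inr (n + m))
  br_GL : ∀ n m : ℤ, B (b (inr m)) (b (inl n)) = -((qInt q (m + 1) - qInt q n) • b (inr (n + m)))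
  br_GG : ∀ n m : ℤ, B (b (inr n)) (b (inr m)) = 0
  α_L : ∀ n : ℤ, α (b (inl n)) = (1 + q ^ n) • b (inl n)
  α_G : ∀ n : ℤ, α (b (inr n)) = (1 + q ^ (n + 1)) • b (inr n)

namespace IsQWitt

variable {W : Type*} [AddCommGroup W] [Module ℂ W] {q : ℂ} {b : Module.Basis (ℤ ⊕ ℤ) ℂ W}
  {B : W →ₗ[ℂ] W →ₗ[ℂ] W} {α : W →ₗ[ℂ] W}

lemma adL_L (hW : IsQWitt q b B α) (s n : ℤ) :
    B (b (inl s)) (b (inl n)) = (qInt q n - qInt q s) • b (inl (n + s)) := by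
  rw [hW.br_LL, add_comm s n]

lemma adL_G (hW : IsQWitt q b B α) (s n : ℤ) :
    B (b (inl s)) (b (inr n)) = (qInt q (n + 1) - qInt q s) • b (inr (n + s)) := by
  rw [hW.br_LG, add_comm s n]

variable {s : ℤ} {φ : W →ₗ[ℂ] W} {f g : ℤ → ℂ}

lemma leibniz_LL_iff (hW : IsQWitt q b B α) (hs : 1 + q ^ s ≠ 0)
    (hf : ∀ n, φ (b (inl n)) = f n • b (inl (n + s))) (n m : ℤ) :
    φ (B (b (inl n)) (b (inl m))) = (1 / (1 + q ^ s)) •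
        (B (φ (b (inl n))) (α (b (inl m))) + B (α (b (inl n))) (φ (b (inl m)))) ↔
      (qInt q m - qInt q n) * f (n + m) * (1 + q ^ s) =
        f n * (1 + q ^ m) * (qInt q m - qInt q (n + s)) +
          (1 + q ^ n) * f m * (qInt q (m + s) - qInt q n) := by
  simp only [hW.br_LL, hW.α_L, hf, map_smul, LinearMap.smul_apply, smul_smul]
  rw [show n + s + m = n + m + s by ring, show n + (m + s) = n + m + s by ring, ← add_smul,
    smul_smul, (smul_left_injective ℂ (b.ne_zero _)).eq_iff]
  field_simp

lemma leibniz_LG_iff (hW : IsQWitt q b B α) (hs : 1 + q ^ s ≠ 0)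
    (hf : ∀ n, φ (b (inl n)) = f n • b (inl (n + s)))
    (hg : ∀ n, φ (b (inr n)) = g n • b (inr (n + s))) (n m : ℤ) :
    φ (B (b (inl n)) (b (inr m))) = (1 / (1 + q ^ s)) •
        (B (φ (b (inl n))) (α (b (inr m))) + B (α (b (inl n))) (φ (b (inr m)))) ↔
      (qInt q (m + 1) - qInt q n) * g (n + m) * (1 + q ^ s) =
        f n * (1 + q ^ (m + 1)) * (qInt q (m + 1) - qInt q (n + s)) +
          (1 + q ^ n) * g m * (qInt q (m + s + 1) - qInt q n) := by
  simp only [hW.br_LG, hW.α_L, hW.α_G, hf, hg, map_smul, LinearMap.smul_apply, smul_smul]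
  rw [show n + s + m = n + m + s by ring, show n + (m + s) = n + m + s by ring,
    show m + s + 1 = m + 1 + s by ring, ← add_smul, smul_smul,
    (smul_left_injective ℂ (b.ne_zero _)).eq_iff]
  field_simp

lemma leibniz_GL_iff (hW : IsQWitt q b B α) (hs : 1 + q ^ s ≠ 0)
    (hf : ∀ n, φ (b (inl n)) = f n • b (inl (n + s)))
    (hg : ∀ n, φ (b (inr n)) = g n • b (inr (n + s))) (n m : ℤ) :
    φ (B (b (inr m)) (b (inl n))) = (1 / (1 + q ^ s)) •
        (B (φ (b (inr m))) (α (b (inl n))) + B (α (b (inr m))) (φ (b (inl n)))) ↔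
      (qInt q (m + 1) - qInt q n) * g (n + m) * (1 + q ^ s) =
        f n * (1 + q ^ (m + 1)) * (qInt q (m + 1) - qInt q (n + s)) +
          (1 + q ^ n) * g m * (qInt q (m + s + 1) - qInt q n) := by
  simp only [hW.br_GL, hW.α_L, hW.α_G, hf, hg, map_neg, map_smul, LinearMap.smul_apply,
    smul_neg, smul_smul]
  rw [show n + (m + s) = n + m + s by ring, show n + s + m = n + m + s by ring,
    show m + s + 1 = m + 1 + s by ring, ← neg_add_rev, ← add_smul, smul_neg, smul_smul,
    neg_inj, (smul_left_injective ℂ (b.ne_zero _)).eq_iff]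
  field_simp

lemma leibniz_adL (hW : IsQWitt q b B α) (hq0 : q ≠ 0) (hs : 1 + q ^ s ≠ 0) (x y : W) :
    B (b (inl s)) (B x y) = (1 / (1 + q ^ s)) •
      (B (B (b (inl s)) x) (α y) + B (α x) (B (b (inl s)) y)) := by
  have hf := hW.adL_L s
  have hg := hW.adL_G s
  have had := qLeibnizCoeffs_adL hq0 s
  refine leibniz_of_basis b B (B (b (inl s))) α _ ?_ x y
  rintro (n | n) (m | m)
  · exact (hW.leibniz_LL_iff hs hf n m).mpr (had.LL n m)
  · exact (hW.leibniz_LG_iff hs hf hg n m).mpr (had.LG n m)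
  · exact (hW.leibniz_GL_iff hs hf hg m n).mpr (had.LG m n)
  · simp [hW.br_GG, hW.α_G, hg]

end IsQWitt

lemma inl_mem_wGr {W : Type*} [AddCommGroup W] [Module ℂ W] (b : Module.Basis (ℤ ⊕ ℤ) ℂ W)
    (n : ℤ) : b (inl n) ∈ wGr b 0 := by
  simpa [wGr] using Submodule.subset_span (Set.mem_range_self n)

lemma inr_mem_wGr {W : Type*} [AddCommGroup W] [Module ℂ W] (b : Module.Basis (ℤ ⊕ ℤ) ℂ W)
    (n : ℤ) : b (inr n) ∈ wGr b 1 := by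
  simpa [wGr] using Submodule.subset_span (Set.mem_range_self n)

/-- For real `q > 0`, `q ≠ 1`: every even `q`-derivation of degree `s` of
the `q`-deformed Witt superalgebra is a scalar multiple of the inner `q`-derivation
`ad_{L_s} : x ↦ [L_s, x]`, and `ad_{L_s}` is itself an even `q`-derivation of degree `s`.
Hence `(Der W^q)₀ = ⊕_{s ∈ ℤ} ⟨ad_{L_s}⟩`. -/
theorem qWitt_even_qDerivations
    (q : ℝ) (hq0 : 0 < q) (hq1 : q ≠ 1)
    (W : Type*) [AddCommGroup W] [Module ℂ W] (b : Module.Basis (ℤ ⊕ ℤ) ℂ W)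
    (br : W → W → W)
    (hbr1 : ∀ x, IsLinearMap ℂ (br x)) (hbr2 : ∀ y, IsLinearMap ℂ fun x => br x y)
    (α : W → W) (hα : IsLinearMap ℂ α)
    (hLL : ∀ n m : ℤ, br (b (Sum.inl n)) (b (Sum.inl m)) =
        (qInt q m - qInt q n) • b (Sum.inl (n + m)))
    (hLG : ∀ n m : ℤ, br (b (Sum.inl n)) (b (Sum.inr m)) =
        (qInt q (m + 1) - qInt q n) • b (Sum.inr (n + m)))
    (hGL : ∀ n m : ℤ, br (b (Sum.inr m)) (b (Sum.inl n)) =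
        -((qInt q (m + 1) - qInt q n) • b (Sum.inr (n + m))))
    (hGG : ∀ n m : ℤ, br (b (Sum.inr n)) (b (Sum.inr m)) = 0)
    (hαL : ∀ n : ℤ, α (b (Sum.inl n)) = (1 + (q : ℂ) ^ n) • b (Sum.inl n))
    (hαG : ∀ n : ℤ, α (b (Sum.inr n)) = (1 + (q : ℂ) ^ (n + 1)) • b (Sum.inr n))
    -- φ is an even q-derivation of degree s
    (s : ℤ) (φ : W → W) (hφ : IsLinearMap ℂ φ)
    (hφL : ∀ n : ℤ, φ (b (Sum.inl n)) ∈ Submodule.span ℂ {b (Sum.inl (n + s))})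
    (hφG : ∀ n : ℤ, φ (b (Sum.inr n)) ∈ Submodule.span ℂ {b (Sum.inr (n + s))})
    (hleib : ∀ (i j : ZMod 2), ∀ x ∈ wGr b i, ∀ y ∈ wGr b j,
        φ (br x y) = (1 / (1 + (q : ℂ) ^ s)) •
          (br (φ x) (α y) + br (α x) (φ y))) :
    (∃ c : ℂ, ∀ x : W, φ x = c • br (b (Sum.inl s)) x) ∧
    -- ad_{L_s} is itself an even q-derivation of degree s
    (∀ n : ℤ, br (b (Sum.inl s)) (b (Sum.inl n)) ∈ Submodule.span ℂ {b (Sum.inl (n + s))}) ∧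
    (∀ n : ℤ, br (b (Sum.inl s)) (b (Sum.inr n)) ∈ Submodule.span ℂ {b (Sum.inr (n + s))}) ∧
    (∀ (i j : ZMod 2), ∀ x ∈ wGr b i, ∀ y ∈ wGr b j,
        br (b (Sum.inl s)) (br x y) = (1 / (1 + (q : ℂ) ^ s)) •
          (br (br (b (Sum.inl s)) x) (α y) + br (α x) (br (b (Sum.inl s)) y))) := by
  have hq := injective_ofReal_zpow hq0 hq1
  have hs := one_add_zpow_ne_zero hq s
  let B : W →ₗ[ℂ] W →ₗ[ℂ] W := LinearMap.mk₂ ℂ br (fun x y z => (hbr2 z).map_add x y)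
    (fun c x y => (hbr2 y).map_smul c x) (fun x y z => (hbr1 x).map_add y z)
    (fun c x y => (hbr1 x).map_smul c y)
  have hW : IsQWitt (q : ℂ) b B (IsLinearMap.mk' α hα) := ⟨hLL, hLG, hGL, hGG, hαL, hαG⟩
  choose f hf using fun n => Submodule.mem_span_singleton.mp (hφL n)
  choose g hg using fun n => Submodule.mem_span_singleton.mp (hφG n)
  have hf' n : IsLinearMap.mk' φ hφ (b (inl n)) = f n • b (inl (n + s)) := (hf n).symm
  have hg' n : IsLinearMap.mk' φ hφ (b (inr n)) = g n • b (inr (n + s)) := (hg n).symm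
  have hcoeff : QLeibnizCoeffs q s f g :=
    { LL n m := (hW.leibniz_LL_iff hs hf' n m).mp
        (hleib 0 0 _ (inl_mem_wGr b n) _ (inl_mem_wGr b m))
      LG n m := (hW.leibniz_LG_iff hs hf' hg' n m).mp
        (hleib 0 1 _ (inl_mem_wGr b n) _ (inr_mem_wGr b m)) }
  obtain ⟨c, rfl, rfl⟩ := hcoeff.exists_eq_smul_adL hq
  have hφ_eq : IsLinearMap.mk' φ hφ = c • B (b (inl s)) := b.ext fun
    | inl n => by simp [hf', hW.adL_L, smul_smul]
    | inr n => by simp [hg', hW.adL_G, smul_smul]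
  refine ⟨⟨c, LinearMap.congr_fun hφ_eq⟩,
    fun n => Submodule.mem_span_singleton.mpr ⟨_, (hW.adL_L s n).symm⟩,
    fun n => Submodule.mem_span_singleton.mpr ⟨_, (hW.adL_G s n).symm⟩,
    fun _ _ x _ y _ => hW.leibniz_adL (ne_zero_of_zpow_injective hq) hs x y⟩
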